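/- arXiv:1201.0405 — 2 statements merged into one kernel-verified Lean document; each statement's English description precedes it below -/
import Mathlib

section
/- Given any instance Nim−F of CIS-Nim, define S as the set of ordered pairs (x,y) of nonnegative integers such that there exists z with z < y < x and {x,y,z} a P-position. Define r(x,y) as the number of elements of S of the form (x',y) with x' ≥ x, and b(x,y) as the number of elements of S of the form (x,y') with y' ≤ y. Then for all x > 4·F_max + 3·|F|, r(x,x) + 2·b(x,x) + 1 = x. -/
open Filter

/-- A move in Nim: strictly decrease one heap. -/
def NimMove (a b : Multiset ℕ) : Prop :=
  ∃ x y, x ∈ a ∧ y < x ∧ b = y ::ₘ a.erase x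

theorem NimMove.sum_lt {a b : Multiset ℕ} (h : NimMove a b) : b.sum < a.sum := by
  obtain ⟨x, y, hx, hyx, rfl⟩ := h
  have hc : x ::ₘ a.erase x = a := Multiset.cons_erase hx
  have h1 : (y ::ₘ a.erase x).sum = y + (a.erase x).sum := Multiset.sum_cons y _
  have h2 : a.sum = x + (a.erase x).sum := by
    conv_lhs => rw [← hc]
    exact Multiset.sum_cons x _
  omega

/-- P-positions of Nim minus a forbidden finite set `F`, by the standard recursion:
a position is P iff every child not in `F` is an N-position. -/
def NimP (F : Finset (Multiset ℕ)) (a : Multiset ℕ) : Prop :=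
  ∀ b, NimMove a b → b ∉ F → ¬ NimP F b
termination_by a.sum
decreasing_by exact NimMove.sum_lt (by assumption)

/-- A P-position of Nim−F : a valid position (not forbidden) which is P. -/
def PPos (F : Finset (Multiset ℕ)) (a : Multiset ℕ) : Prop :=
  a ∉ F ∧ NimP F a

/-- Largest heap size appearing in any forbidden position. -/
def Fmax (F : Finset (Multiset ℕ)) : ℕ := F.sup Multiset.sup

/-- The set S of pairs (x,y) such that there is z with z < y < x and {x,y,z} a P-position. -/
def Sset (F : Finset (Multiset ℕ)) : Set (ℕ × ℕ) :=
  {p | ∃ z, z < p.2 ∧ p.2 < p.1 ∧ PPos F {p.1, p.2, z}}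

/-- r(x,y): number of elements of S of the form (x',y) with x' ≥ x. -/
noncomputable def rdef (F : Finset (Multiset ℕ)) (x y : ℕ) : ℕ :=
  {x' | x ≤ x' ∧ (x', y) ∈ Sset F}.ncard

/-- b(x,y): number of elements of S of the form (x,y') with y' ≤ y. -/
noncomputable def bdef (F : Finset (Multiset ℕ)) (x y : ℕ) : ℕ :=
  {y' | y' ≤ y ∧ (x, y') ∈ Sset F}.ncard

/-- U_{x,y} = A ∪ B ∪ C ∪ D. -/
def Uset (F : Finset (Multiset ℕ)) (x y : ℕ) : Set (ℕ × ℕ) :=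
  {p | (p.2 < p.1 ∧ p.1 ≤ x ∧ bdef F p.1 p.1 ≥ p.1 - p.2) ∨
       (p.1 = x ∧ p.2 < y ∧ bdef F x (y - 1) ≥ y - p.2) ∨
       (y ≤ p.2 ∧ p.2 < x ∧ x ≤ p.1 ∧ rdef F x p.2 > p.1 - x) ∨
       (p.2 < y ∧ y ≤ x ∧ x < p.1 ∧ rdef F (x + 1) p.2 > p.1 - (x + 1))}

/-- Ū_{x,y}: agrees with U_{x,y} for second coordinate < x, and for y' ≥ x contains
(x',y') iff y' < x' ≤ 2y' and (y', ⌊x'/2⌋) ∉ Ū_{x,y}. -/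
def Ubar (F : Finset (Multiset ℕ)) (x y : ℕ) (p : ℕ × ℕ) : Prop :=
  if p.2 < x then p ∈ Uset F x y
  else if h : p.2 < p.1 then p.1 ≤ 2 * p.2 ∧ ¬ Ubar F x y (p.2, p.1 / 2)
  else False
termination_by p.1
decreasing_by exact h

/-- S_n = Ū_{n,0}. -/
def Sn (F : Finset (Multiset ℕ)) (n : ℕ) : Set (ℕ × ℕ) := {p | Ubar F n 0 p}

/-- R_n = {(x,y) : y < n ≤ x ≤ 2y}. -/
def Rn (n : ℕ) : Set (ℕ × ℕ) := {p | p.2 < n ∧ n ≤ p.1 ∧ p.1 ≤ 2 * p.2}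

/-- h(m,n) = |R_n ∩ S_m|. -/
noncomputable def hdef (F : Finset (Multiset ℕ)) (m n : ℕ) : ℕ := (Rn n ∩ Sn F m).ncard

/-- π(n): number of P-positions (unordered multisets) with all entries < n. -/
noncomputable def piNim (F : Finset (Multiset ℕ)) (n : ℕ) : ℕ :=
  {s : Multiset ℕ | s.card = 3 ∧ (∀ a ∈ s, a < n) ∧ PPos F s}.ncard

----------------------------------------------------------------
-- auxiliary lemmas
----------------------------------------------------------------

lemma nimP_iff (F : Finset (Multiset ℕ)) (a : Multiset ℕ) :
    NimP F a ↔ ∀ b, NimMove a b → b ∉ F → ¬ NimP F b := by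
  rw [NimP]

lemma ms_swap12 (a b c : ℕ) : ({a,b,c} : Multiset ℕ) = {b,a,c} :=
  Multiset.cons_swap a b {c}

lemma ms_swap23 (a b c : ℕ) : ({a,b,c} : Multiset ℕ) = {a,c,b} :=
  congrArg (fun s => a ::ₘ s) (Multiset.cons_swap b c 0)

lemma ms_rot (a b c : ℕ) : ({a,b,c} : Multiset ℕ) = {b,c,a} := by
  rw [ms_swap12, ms_swap23]

lemma ms_rot' (a b c : ℕ) : ({a,b,c} : Multiset ℕ) = {c,a,b} := by
  rw [ms_rot, ms_rot]

lemma mem_three {p q r e : ℕ} (h : e ∈ ({p,q,r} : Multiset ℕ)) : e = p ∨ e = q ∨ e = r := by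
  simpa using h

lemma mv1 {p y : ℕ} (q r : ℕ) (h : y < p) : NimMove ({p,q,r} : Multiset ℕ) {y,q,r} := by
  refine ⟨p, y, by simp, h, ?_⟩
  have : ({p,q,r} : Multiset ℕ).erase p = {q,r} := by
    show (p ::ₘ {q,r}).erase p = {q,r}
    exact Multiset.erase_cons_head p _
  rw [this]
  rfl

lemma mv2 {q y : ℕ} (p r : ℕ) (h : y < q) : NimMove ({p,q,r} : Multiset ℕ) {p,y,r} := by
  rw [ms_swap12 p q r, ms_swap12 p y r]
  exact mv1 p r h

lemma mv3 {r y : ℕ} (p q : ℕ) (h : y < r) : NimMove ({p,q,r} : Multiset ℕ) {p,q,y} := by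
  rw [ms_rot' p q r, ms_rot' p q y]
  exact mv1 p q h

lemma move_cases {p q r : ℕ} {m : Multiset ℕ} (h : NimMove ({p,q,r} : Multiset ℕ) m) :
    (∃ y, y < p ∧ m = {y,q,r}) ∨ (∃ y, y < q ∧ m = {p,y,r}) ∨ (∃ y, y < r ∧ m = {p,q,y}) := by
  obtain ⟨e, y, he, hy, rfl⟩ := h
  rcases mem_three he with rfl | rfl | rfl
  · left
    refine ⟨y, hy, ?_⟩
    have : ({e,q,r} : Multiset ℕ).erase e = {q,r} := by
      show (e ::ₘ {q,r}).erase e = {q,r}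
      exact Multiset.erase_cons_head e _
    rw [this]; rfl
  · right; left
    refine ⟨y, hy, ?_⟩
    have : ({p,e,r} : Multiset ℕ).erase e = {p,r} := by
      rw [ms_swap12]
      show (e ::ₘ {p,r}).erase e = {p,r}
      exact Multiset.erase_cons_head e _
    rw [this]
    exact ms_swap12 y p r
  · right; right
    refine ⟨y, hy, ?_⟩
    have : ({p,q,e} : Multiset ℕ).erase e = {p,q} := by
      rw [ms_rot' p q e]
      show (e ::ₘ {p,q}).erase e = {p,q}
      exact Multiset.erase_cons_head e _
    rw [this]
    exact ms_rot y p q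

lemma pP_child_not {F : Finset (Multiset ℕ)} {a m : Multiset ℕ} (h : PPos F a)
    (hm : NimMove a m) (hf : m ∉ F) : ¬ NimP F m :=
  (nimP_iff F a).mp h.2 m hm hf

lemma not_nimP_elim {F : Finset (Multiset ℕ)} {a : Multiset ℕ} (h : ¬ NimP F a) :
    ∃ m, NimMove a m ∧ PPos F m := by
  rw [nimP_iff] at h
  push_neg at h
  obtain ⟨m, hm, hmF, hN⟩ := h
  exact ⟨m, hm, hmF, hN⟩

lemma third_lt_false {F : Finset (Multiset ℕ)} {a b c d : ℕ}
    (h1 : PPos F {a,b,c}) (h2 : PPos F {a,b,d}) (h : c < d) : False :=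
  pP_child_not h2 (mv3 a b h) h1.1 h1.2

lemma third_unique {F : Finset (Multiset ℕ)} {a b c d : ℕ}
    (h1 : PPos F {a,b,c}) (h2 : PPos F {a,b,d}) : c = d := by
  rcases lt_trichotomy c d with h | h | h
  · exact absurd (third_lt_false h1 h2 h) (by simp)
  · exact h
  · exact absurd (third_lt_false h2 h1 h) (by simp)

lemma le_Fmax {F : Finset (Multiset ℕ)} {s : Multiset ℕ} {e : ℕ}
    (hs : s ∈ F) (he : e ∈ s) : e ≤ Fmax F :=
  le_trans (Multiset.le_sup he) (Finset.le_sup hs)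

lemma big_of_lt {F : Finset (Multiset ℕ)} {e : ℕ} (h : Fmax F < e) :
    ∀ s : Multiset ℕ, e ∈ s → s ∉ F :=
  fun s he hs => absurd (le_Fmax hs he) (not_le.mpr h)

----------------------------------------------------------------
-- small-board lemmas
----------------------------------------------------------------

lemma l5 {F : Finset (Multiset ℕ)} {a X : ℕ} (hBa : ∀ s : Multiset ℕ, a ∈ s → s ∉ F)
    (h : PPos F {X,a,0}) : X ≤ a := by
  by_cases hN : NimP F ({a,a,0} : Multiset ℕ)
  · have hP : PPos F {a,a,0} := ⟨hBa _ (by simp), hN⟩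
    -- both contain the pair (a,0); compare thirds
    have h1 : PPos F {a,0,X} := by rw [← ms_swap23, ← ms_swap12]; exact h
    have h2 : PPos F {a,0,a} := by rw [← ms_swap23]; exact hP
    exact le_of_eq (third_unique h1 h2)
  · obtain ⟨m, hm, hPm⟩ := not_nimP_elim hN
    rcases move_cases hm with ⟨y, hy, rfl⟩ | ⟨y, hy, rfl⟩ | ⟨y, hy, rfl⟩
    · have h1 : PPos F {a,0,X} := by rw [← ms_swap23, ← ms_swap12]; exact h
      have h2 : PPos F {a,0,y} := by rw [← ms_rot]; exact hPm
      have := third_unique h1 h2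
      omega
    · have h1 : PPos F {a,0,X} := by rw [← ms_swap23, ← ms_swap12]; exact h
      have h2 : PPos F {a,0,y} := by rw [← ms_swap23]; exact hPm
      have := third_unique h1 h2
      omega
    · omega

lemma l6 {F : Finset (Multiset ℕ)} {a X : ℕ} (hBa : ∀ s : Multiset ℕ, a ∈ s → s ∉ F)
    (h : PPos F {X,a,a}) : X ≤ a := by
  have h1 : PPos F {a,a,X} := by rw [← ms_rot]; exact h
  by_cases hN : NimP F ({a,a,a} : Multiset ℕ)
  · have hP : PPos F {a,a,a} := ⟨hBa _ (by simp), hN⟩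
    exact le_of_eq (third_unique h1 hP)
  · obtain ⟨m, hm, hPm⟩ := not_nimP_elim hN
    rcases move_cases hm with ⟨y, hy, rfl⟩ | ⟨y, hy, rfl⟩ | ⟨y, hy, rfl⟩
    · have h2 : PPos F {a,a,y} := by rw [← ms_rot]; exact hPm
      have := third_unique h1 h2
      omega
    · have h2 : PPos F {a,a,y} := by rw [← ms_swap23]; exact hPm
      have := third_unique h1 h2
      omega
    · have := third_unique h1 hPm
      omega

lemma no_xs0 {F : Finset (Multiset ℕ)} {x s : ℕ} (hs : s < x) (hP : PPos F {x,s,0})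
    (halt : 2 * Fmax F + 1 < x ∨ (∀ m : Multiset ℕ, s ∈ m → m ∉ F)) : False := by
  classical
  have hbig : (∀ m : Multiset ℕ, s ∈ m → m ∉ F) → False := by
    intro hBs
    have := l5 hBs hP
    omega
  rcases halt with hx2 | hBs
  swap
  · exact hbig hBs
  have hsF : s ≤ Fmax F := by
    by_contra hc
    exact hbig (big_of_lt (by omega))
  -- for every w in (Fmax, x) there is yw < s with {w,yw,0} a P-position
  have hwit : ∀ w ∈ Finset.Ioo (Fmax F) x, ∃ y, y < s ∧ PPos F {w,y,0} := by
    intro w hw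
    rw [Finset.mem_Ioo] at hw
    have hmv : NimMove ({x,s,0} : Multiset ℕ) {w,s,0} := mv1 s 0 hw.2
    have hval : ({w,s,0} : Multiset ℕ) ∉ F := big_of_lt hw.1 _ (by simp)
    have hnim : ¬ NimP F {w,s,0} := pP_child_not hP hmv hval
    obtain ⟨m, hm, hPm⟩ := not_nimP_elim hnim
    rcases move_cases hm with ⟨y, hy, rfl⟩ | ⟨y, hy, rfl⟩ | ⟨y, hy, rfl⟩
    · -- {y,s,0} : shares pair (s,0) with {x,s,0} : y = x, impossible
      have h1 : PPos F {s,0,x} := by rw [← ms_rot]; exact hP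
      have h2 : PPos F {s,0,y} := by rw [← ms_rot]; exact hPm
      have := third_unique h1 h2
      omega
    · exact ⟨y, hy, hPm⟩
    · omega
  set f : ℕ → ℕ := fun w => if h : ∃ y, y < s ∧ PPos F {w,y,0} then h.choose else 0 with hf
  have hmaps : ∀ w ∈ Finset.Ioo (Fmax F) x, f w ∈ Finset.range s := by
    intro w hw
    have h := hwit w hw
    rw [hf]
    simp only [dif_pos h]
    exact Finset.mem_range.mpr h.choose_spec.1
  have hcard : (Finset.range s).card < (Finset.Ioo (Fmax F) x).card := by
    rw [Finset.card_range, Nat.card_Ioo]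
    omega
  obtain ⟨w1, hw1, w2, hw2, hne, heq⟩ :=
    Finset.exists_ne_map_eq_of_card_lt_of_maps_to hcard hmaps
  have h1 := hwit w1 hw1
  have h2 := hwit w2 hw2
  have e1 : f w1 = h1.choose := by rw [hf]; simp only [dif_pos h1]
  have e2 : f w2 = h2.choose := by rw [hf]; simp only [dif_pos h2]
  have p1 : PPos F {w1, f w1, 0} := by rw [e1]; exact h1.choose_spec.2
  have p2 : PPos F {w2, f w2, 0} := by rw [e2]; exact h2.choose_spec.2
  rw [heq] at p1
  have q1 : PPos F {f w2, 0, w1} := by rw [← ms_rot]; exact p1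
  have q2 : PPos F {f w2, 0, w2} := by rw [← ms_rot]; exact p2
  exact hne (third_unique q1 q2)

lemma no_xvv {F : Finset (Multiset ℕ)} {x v : ℕ} (hv : v < x) (hP : PPos F {x,v,v})
    (halt : 2 * Fmax F + 1 < x ∨ (∀ m : Multiset ℕ, v ∈ m → m ∉ F)) : False := by
  classical
  have hbig : (∀ m : Multiset ℕ, v ∈ m → m ∉ F) → False := by
    intro hBv
    have := l6 hBv hP
    omega
  rcases halt with hx2 | hBv
  swap
  · exact hbig hBv
  have hvF : v ≤ Fmax F := by
    by_contra hc
    exact hbig (big_of_lt (by omega))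
  have hwit : ∀ w ∈ Finset.Ioo (Fmax F) x, ∃ y, y < v ∧ PPos F {w,y,v} := by
    intro w hw
    rw [Finset.mem_Ioo] at hw
    have hmv : NimMove ({x,v,v} : Multiset ℕ) {w,v,v} := mv1 v v hw.2
    have hval : ({w,v,v} : Multiset ℕ) ∉ F := big_of_lt hw.1 _ (by simp)
    have hnim : ¬ NimP F {w,v,v} := pP_child_not hP hmv hval
    obtain ⟨m, hm, hPm⟩ := not_nimP_elim hnim
    rcases move_cases hm with ⟨y, hy, rfl⟩ | ⟨y, hy, rfl⟩ | ⟨y, hy, rfl⟩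
    · -- {y,v,v} : shares pair (v,v) with {x,v,v} : y = x, impossible
      have h1 : PPos F {v,v,x} := by rw [← ms_rot]; exact hP
      have h2 : PPos F {v,v,y} := by rw [← ms_rot]; exact hPm
      have := third_unique h1 h2
      omega
    · exact ⟨y, hy, hPm⟩
    · exact ⟨y, hy, by rw [← ms_swap23]; exact hPm⟩
  set f : ℕ → ℕ := fun w => if h : ∃ y, y < v ∧ PPos F {w,y,v} then h.choose else 0 with hf
  have hmaps : ∀ w ∈ Finset.Ioo (Fmax F) x, f w ∈ Finset.range v := by
    intro w hw
    have h := hwit w hw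
    rw [hf]
    simp only [dif_pos h]
    exact Finset.mem_range.mpr h.choose_spec.1
  have hcard : (Finset.range v).card < (Finset.Ioo (Fmax F) x).card := by
    rw [Finset.card_range, Nat.card_Ioo]
    omega
  obtain ⟨w1, hw1, w2, hw2, hne, heq⟩ :=
    Finset.exists_ne_map_eq_of_card_lt_of_maps_to hcard hmaps
  have h1 := hwit w1 hw1
  have h2 := hwit w2 hw2
  have e1 : f w1 = h1.choose := by rw [hf]; simp only [dif_pos h1]
  have e2 : f w2 = h2.choose := by rw [hf]; simp only [dif_pos h2]
  have p1 : PPos F {w1, f w1, v} := by rw [e1]; exact h1.choose_spec.2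
  have p2 : PPos F {w2, f w2, v} := by rw [e2]; exact h2.choose_spec.2
  rw [heq] at p1
  have q1 : PPos F {f w2, v, w1} := by rw [← ms_rot]; exact p1
  have q2 : PPos F {f w2, v, w2} := by rw [← ms_rot]; exact p2
  exact hne (third_unique q1 q2)

lemma exists_e {F : Finset (Multiset ℕ)} {x : ℕ} (hx0 : 0 < x)
    (hBx : ∀ s : Multiset ℕ, x ∈ s → s ∉ F)
    (halt : ∀ v : ℕ, 2 * Fmax F + 1 < x ∨ (∀ m : Multiset ℕ, v ∈ m → m ∉ F)) :
    ∃ c, c < x ∧ PPos F {x,x,c} := by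
  by_cases hN : NimP F ({x,x,x} : Multiset ℕ)
  · -- {x,x,x} would be a P-position: impossible
    exfalso
    have hP : PPos F {x,x,x} := ⟨hBx _ (by simp), hN⟩
    have hmv : NimMove ({x,x,x} : Multiset ℕ) {x,x,0} := mv3 x x hx0
    have hval : ({x,x,0} : Multiset ℕ) ∉ F := hBx _ (by simp)
    have hnim : ¬ NimP F {x,x,0} := pP_child_not hP hmv hval
    obtain ⟨m, hm, hPm⟩ := not_nimP_elim hnim
    rcases move_cases hm with ⟨y, hy, rfl⟩ | ⟨y, hy, rfl⟩ | ⟨y, hy, rfl⟩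
    · have : PPos F {x,y,0} := by rw [← ms_swap12]; exact hPm
      exact no_xs0 hy this (halt y)
    · exact no_xs0 hy hPm (halt y)
    · omega
  · obtain ⟨m, hm, hPm⟩ := not_nimP_elim hN
    rcases move_cases hm with ⟨y, hy, rfl⟩ | ⟨y, hy, rfl⟩ | ⟨y, hy, rfl⟩
    · exact ⟨y, hy, by rw [← ms_rot]; exact hPm⟩
    · exact ⟨y, hy, by rw [← ms_swap23]; exact hPm⟩
    · exact ⟨y, hy, hPm⟩

lemma exists_third {F : Finset (Multiset ℕ)} {x v : ℕ} (hv : v < x) (hFx : Fmax F < x) :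
    ∃ w, PPos F {x,v,w} := by
  classical
  by_contra hno
  push_neg at hno
  set D : Finset ℕ := Finset.Icc (x+1) (x+1+(x+1)*(x+1)) with hD
  have hwit : ∀ z ∈ D, ∃ p : ℕ × ℕ, p.1 ≤ x ∧ p.2 ≤ x ∧ PPos F {p.1, p.2, z} := by
    intro z hz
    rw [hD, Finset.mem_Icc] at hz
    have hzx : x < z := by omega
    have hval : ({x,v,z} : Multiset ℕ) ∉ F :=
      big_of_lt (show Fmax F < z by omega) _ (by simp)
    have hnim : ¬ NimP F {x,v,z} := by
      intro hN
      exact hno z ⟨hval, hN⟩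
    obtain ⟨m, hm, hPm⟩ := not_nimP_elim hnim
    rcases move_cases hm with ⟨y, hy, rfl⟩ | ⟨y, hy, rfl⟩ | ⟨y, hy, rfl⟩
    · exact ⟨(y, v), by omega, by omega, hPm⟩
    · exact ⟨(x, y), le_rfl, by omega, hPm⟩
    · exact absurd hPm (hno y)
  set f : ℕ → ℕ × ℕ :=
    fun z => if h : ∃ p : ℕ × ℕ, p.1 ≤ x ∧ p.2 ≤ x ∧ PPos F {p.1, p.2, z} then h.choose
      else (0,0) with hf
  have hmaps : ∀ z ∈ D, f z ∈ Finset.range (x+1) ×ˢ Finset.range (x+1) := by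
    intro z hz
    have h := hwit z hz
    rw [hf]
    simp only [dif_pos h]
    rw [Finset.mem_product, Finset.mem_range, Finset.mem_range]
    exact ⟨by have := h.choose_spec.1; omega, by have := h.choose_spec.2.1; omega⟩
  have hcard : (Finset.range (x+1) ×ˢ Finset.range (x+1)).card < D.card := by
    rw [Finset.card_product, Finset.card_range, hD, Nat.card_Icc]
    omega
  obtain ⟨z1, hz1, z2, hz2, hne, heq⟩ :=
    Finset.exists_ne_map_eq_of_card_lt_of_maps_to hcard hmaps
  have h1 := hwit z1 hz1
  have h2 := hwit z2 hz2
  have e1 : f z1 = h1.choose := by rw [hf]; simp only [dif_pos h1]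
  have e2 : f z2 = h2.choose := by rw [hf]; simp only [dif_pos h2]
  have p1 : PPos F {(f z1).1, (f z1).2, z1} := by rw [e1]; exact h1.choose_spec.2.2
  have p2 : PPos F {(f z2).1, (f z2).2, z2} := by rw [e2]; exact h2.choose_spec.2.2
  rw [heq] at p1
  exact hne (third_unique p1 p2)

theorem r_add_two_b' (F : Finset (Multiset ℕ)) (x : ℕ)
    (hx : x > 4 * Fmax F + 3 * F.card) :
    rdef F x x + 2 * bdef F x x + 1 = x := by
  classical
  have hx0 : 0 < x := by omega
  have hFx : Fmax F < x := by
    rcases Finset.eq_empty_or_nonempty F with hF | hF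
    · rw [hF]
      simpa [Fmax] using hx0
    · have := Finset.card_pos.mpr hF
      omega
  have hBx : ∀ s : Multiset ℕ, x ∈ s → s ∉ F := big_of_lt hFx
  have halt : ∀ v : ℕ, 2 * Fmax F + 1 < x ∨ (∀ m : Multiset ℕ, v ∈ m → m ∉ F) := by
    intro v
    rcases Finset.eq_empty_or_nonempty F with hF | hF
    · right
      intro m _
      rw [hF]
      exact Finset.notMem_empty m
    · left
      have := Finset.card_pos.mpr hF
      omega
  obtain ⟨c, hclt, hcP⟩ := exists_e hx0 hBx halt
  have hkz : ∀ v, v < x → ¬ PPos F {x,v,v} := fun v hv hP => no_xvv hv hP (halt v)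
  set lo := (Finset.range x).filter (fun v => ∃ w, w < v ∧ PPos F {x,v,w}) with hlo_def
  set hi := (Finset.range x).filter (fun v => ∃ w, v < w ∧ w < x ∧ PPos F {x,v,w}) with hhi_def
  set Rf := (Finset.range x).filter (fun v => ∃ w, x < w ∧ PPos F {x,v,w}) with hRf_def
  have mem_lo : ∀ v, v ∈ lo ↔ (v < x ∧ ∃ w, w < v ∧ PPos F {x,v,w}) := by
    intro v
    rw [hlo_def, Finset.mem_filter, Finset.mem_range]
  have mem_hi : ∀ v, v ∈ hi ↔ (v < x ∧ ∃ w, v < w ∧ w < x ∧ PPos F {x,v,w}) := by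
    intro v
    rw [hhi_def, Finset.mem_filter, Finset.mem_range]
  have mem_Rf : ∀ v, v ∈ Rf ↔ (v < x ∧ ∃ w, x < w ∧ PPos F {x,v,w}) := by
    intro v
    rw [hRf_def, Finset.mem_filter, Finset.mem_range]
  -- c itself is recognized through the pair (x,c)
  have hcP' : PPos F {x,c,x} := by
    rw [← ms_swap23]
    exact hcP
  -- coverage
  have hcover : ∀ v, v < x → v ∈ lo ∨ v ∈ hi ∨ v ∈ Rf ∨ v = c := by
    intro v hv
    obtain ⟨w, hw⟩ := exists_third hv hFx
    rcases lt_trichotomy w v with h | h | h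
    · exact Or.inl ((mem_lo v).mpr ⟨hv, w, h, hw⟩)
    · exfalso
      apply hkz v hv
      rw [h] at hw
      exact hw
    · rcases lt_trichotomy w x with h2 | h2 | h2
      · exact Or.inr (Or.inl ((mem_hi v).mpr ⟨hv, w, h, h2, hw⟩))
      · refine Or.inr (Or.inr (Or.inr ?_))
        rw [h2] at hw
        have h3 : PPos F {x,x,v} := by rw [ms_swap23]; exact hw
        exact third_unique h3 hcP
      · exact Or.inr (Or.inr (Or.inl ((mem_Rf v).mpr ⟨hv, w, h2, hw⟩)))
  -- disjointness
  have d1 : Disjoint lo hi := by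
    rw [Finset.disjoint_left]
    intro v h1 h2
    obtain ⟨_, w1, hw1, hP1⟩ := (mem_lo v).mp h1
    obtain ⟨_, w2, hw2a, hw2b, hP2⟩ := (mem_hi v).mp h2
    have := third_unique hP1 hP2
    omega
  have d2 : Disjoint (lo ∪ hi) Rf := by
    rw [Finset.disjoint_left]
    intro v h1 h2
    obtain ⟨_, w3, hw3, hP3⟩ := (mem_Rf v).mp h2
    rcases Finset.mem_union.mp h1 with h1 | h1
    · obtain ⟨_, w1, hw1, hP1⟩ := (mem_lo v).mp h1
      have hvx := ((mem_lo v).mp h1).1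
      have := third_unique hP1 hP3
      omega
    · obtain ⟨_, w2, hw2a, hw2b, hP2⟩ := (mem_hi v).mp h1
      have := third_unique hP2 hP3
      omega
  have d3 : Disjoint (lo ∪ hi ∪ Rf) {c} := by
    rw [Finset.disjoint_right]
    intro v hv hmem
    rw [Finset.mem_singleton] at hv
    subst hv
    rcases Finset.mem_union.mp hmem with h1 | h1
    · rcases Finset.mem_union.mp h1 with h2 | h2
      · obtain ⟨hvx, w1, hw1, hP1⟩ := (mem_lo v).mp h2
        have := third_unique hP1 hcP'
        omega
      · obtain ⟨hvx, w2, hw2a, hw2b, hP2⟩ := (mem_hi v).mp h2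
        have := third_unique hP2 hcP'
        omega
    · obtain ⟨hvx, w3, hw3, hP3⟩ := (mem_Rf v).mp h1
      have := third_unique hP3 hcP'
      omega
  -- partition of range x
  have hunion : Finset.range x = lo ∪ hi ∪ Rf ∪ {c} := by
    apply Finset.ext
    intro v
    constructor
    · intro hv
      rw [Finset.mem_range] at hv
      rcases hcover v hv with h | h | h | h
      · exact Finset.mem_union.mpr (Or.inl (Finset.mem_union.mpr
          (Or.inl (Finset.mem_union.mpr (Or.inl h)))))
      · exact Finset.mem_union.mpr (Or.inl (Finset.mem_union.mpr
          (Or.inl (Finset.mem_union.mpr (Or.inr h)))))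
      · exact Finset.mem_union.mpr (Or.inl (Finset.mem_union.mpr (Or.inr h)))
      · exact Finset.mem_union.mpr (Or.inr (Finset.mem_singleton.mpr h))
    · intro hv
      rw [Finset.mem_range]
      rcases Finset.mem_union.mp hv with h1 | h1
      · rcases Finset.mem_union.mp h1 with h2 | h2
        · rcases Finset.mem_union.mp h2 with h3 | h3
          · exact ((mem_lo v).mp h3).1
          · exact ((mem_hi v).mp h3).1
        · exact ((mem_Rf v).mp h2).1
      · rw [Finset.mem_singleton] at h1
        omega
  have hcards : x = lo.card + hi.card + Rf.card + 1 := by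
    have := congrArg Finset.card hunion
    rw [Finset.card_range] at this
    rw [Finset.card_union_of_disjoint d3, Finset.card_union_of_disjoint d2,
      Finset.card_union_of_disjoint d1, Finset.card_singleton] at this
    omega
  -- lo and hi have the same cardinality
  set g : ℕ → ℕ := fun v => if h : ∃ w, w < v ∧ PPos F {x,v,w} then h.choose else 0 with hg
  have hlohi : lo.card = hi.card := by
    apply Finset.card_bij (fun a _ => g a)
    · intro a ha
      obtain ⟨hax, hex⟩ := (mem_lo a).mp ha
      have e1 : g a = hex.choose := by rw [hg]; simp only [dif_pos hex]
      have hsp := hex.choose_spec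
      rw [← e1] at hsp
      refine (mem_hi (g a)).mpr ⟨by omega, a, hsp.1, hax, ?_⟩
      rw [ms_swap23]
      exact hsp.2
    · intro a1 ha1 a2 ha2 heq
      obtain ⟨hax1, hex1⟩ := (mem_lo a1).mp ha1
      obtain ⟨hax2, hex2⟩ := (mem_lo a2).mp ha2
      have e1 : g a1 = hex1.choose := by rw [hg]; simp only [dif_pos hex1]
      have e2 : g a2 = hex2.choose := by rw [hg]; simp only [dif_pos hex2]
      have hsp1 := hex1.choose_spec
      have hsp2 := hex2.choose_spec
      rw [← e1] at hsp1
      rw [← e2] at hsp2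
      rw [heq] at hsp1
      have q1 : PPos F {x, g a2, a1} := by rw [← ms_swap23]; exact hsp1.2
      have q2 : PPos F {x, g a2, a2} := by rw [← ms_swap23]; exact hsp2.2
      exact third_unique q1 q2
    · intro b hb
      obtain ⟨hbx, w, hbw, hwx, hPw⟩ := (mem_hi b).mp hb
      have hwlo : w ∈ lo := by
        refine (mem_lo w).mpr ⟨hwx, b, hbw, ?_⟩
        rw [ms_swap23]
        exact hPw
      refine ⟨w, hwlo, ?_⟩
      have hex : ∃ w', w' < w ∧ PPos F {x,w,w'} := ⟨b, hbw, by rw [ms_swap23]; exact hPw⟩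
      have e1 : g w = hex.choose := by rw [hg]; simp only [dif_pos hex]
      have hsp := hex.choose_spec
      have : PPos F {x,w,b} := by rw [ms_swap23]; exact hPw
      have := third_unique hsp.2 this
      omega
  -- bdef equals lo.card
  have hbset : {y' | y' ≤ x ∧ (x, y') ∈ Sset F} = (lo : Set ℕ) := by
    ext y
    simp only [Set.mem_setOf_eq, Sset, Finset.mem_coe]
    rw [mem_lo]
    constructor
    · rintro ⟨hyx, z, hzy, hyx2, hP⟩
      exact ⟨hyx2, z, hzy, hP⟩
    · rintro ⟨hyx, w, hwy, hP⟩
      exact ⟨le_of_lt hyx, w, hwy, hyx, hP⟩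
  have hb : bdef F x x = lo.card := by
    rw [bdef, hbset, Set.ncard_coe_finset]
  -- rdef equals Rf.card
  set gg : ℕ → ℕ := fun v => if h : ∃ w, x < w ∧ PPos F {x,v,w} then h.choose else 0 with hgg
  have hggspec : ∀ v ∈ Rf, x < gg v ∧ PPos F {x, v, gg v} := by
    intro v hv
    obtain ⟨hvx, hex⟩ := (mem_Rf v).mp hv
    have e1 : gg v = hex.choose := by rw [hgg]; simp only [dif_pos hex]
    rw [e1]
    exact hex.choose_spec
  have hrset : {x' | x ≤ x' ∧ (x', x) ∈ Sset F} = ((Rf.image gg : Finset ℕ) : Set ℕ) := by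
    ext X
    simp only [Set.mem_setOf_eq, Sset, Finset.coe_image, Set.mem_image, Finset.mem_coe]
    constructor
    · rintro ⟨hxX, z, hzx, hxX2, hP⟩
      have hzRf : z ∈ Rf := by
        refine (mem_Rf z).mpr ⟨hzx, X, hxX2, ?_⟩
        rw [← ms_rot]
        exact hP
      refine ⟨z, hzRf, ?_⟩
      obtain ⟨hgt, hPg⟩ := hggspec z hzRf
      have hP2 : PPos F {x, z, X} := by rw [← ms_rot]; exact hP
      exact third_unique hPg hP2
    · rintro ⟨v, hvRf, rfl⟩
      obtain ⟨hgt, hPg⟩ := hggspec v hvRf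
      have hvx := ((mem_Rf v).mp hvRf).1
      refine ⟨le_of_lt hgt, v, hvx, hgt, ?_⟩
      rw [ms_rot]
      exact hPg
  have hr : rdef F x x = Rf.card := by
    rw [rdef, hrset, Set.ncard_coe_finset]
    apply Finset.card_image_of_injOn
    intro v1 h1 v2 h2 heq
    obtain ⟨hgt1, hPg1⟩ := hggspec v1 h1
    obtain ⟨hgt2, hPg2⟩ := hggspec v2 h2
    rw [heq] at hPg1
    have q1 : PPos F {x, gg v2, v1} := by rw [← ms_swap23]; exact hPg1
    have q2 : PPos F {x, gg v2, v2} := by rw [← ms_swap23]; exact hPg2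
    exact third_unique q1 q2
  omega


/-- For all x > 4·F_max + 3·|F|, r(x,x) + 2·b(x,x) + 1 = x. -/
theorem r_add_two_b (F : Finset (Multiset ℕ)) (x : ℕ)
    (hx : x > 4 * Fmax F + 3 * F.card) :
    rdef F x x + 2 * bdef F x x + 1 = x := by
  exact r_add_two_b' F x hx
end

section
/- Given any instance Nim−F of CIS-Nim, with S, r, b defined as for the period-two scale invariance analysis, for all x > y > 4·F_max + 3·|F|: if (x,y) ∉ S, then b(x,y) ≥ r(x,y). -/
open Filter

lemma not_nimP_iff (F : Finset (Multiset ℕ)) (a : Multiset ℕ) :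
    ¬ NimP F a ↔ ∃ b, NimMove a b ∧ b ∉ F ∧ NimP F b := by
  rw [nimP_iff]; push_neg; rfl
lemma move_cons {c c' : ℕ} (s : Multiset ℕ) (h : c' < c) : NimMove (c ::ₘ s) (c' ::ₘ s) :=
  ⟨c, c', Multiset.mem_cons_self c s, h, by rw [Multiset.erase_cons_head]⟩
lemma pair_unique {F : Finset (Multiset ℕ)} {s : Multiset ℕ} {c c' : ℕ}
    (h : PPos F (c ::ₘ s)) (h' : PPos F (c' ::ₘ s)) (hne : c ≠ c') : False := by
  rcases hne.lt_or_gt with hlt | hlt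
  · exact ((nimP_iff F _).1 h'.2) _ (move_cons s hlt) h.1 h.2
  · exact ((nimP_iff F _).1 h.2) _ (move_cons s hlt) h'.1 h'.2
lemma notin_F {F : Finset (Multiset ℕ)} {s : Multiset ℕ} {a : ℕ}
    (ha : a ∈ s) (h : Fmax F < a) : s ∉ F := by
  intro hs
  exact absurd ((Multiset.le_sup ha).trans (Finset.le_sup hs)) (not_le.2 h)
lemma move_triple {a b c : ℕ} {t : Multiset ℕ} (hba : b ≠ a) (hca : c ≠ a) (hcb : c ≠ b)
    (h : NimMove (a ::ₘ b ::ₘ c ::ₘ 0) t) :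
    (∃ u, u < a ∧ t = u ::ₘ b ::ₘ c ::ₘ 0) ∨ (∃ u, u < b ∧ t = u ::ₘ a ::ₘ c ::ₘ 0) ∨
      (∃ u, u < c ∧ t = u ::ₘ a ::ₘ b ::ₘ 0) := by
  obtain ⟨p, q, hp, hq, rfl⟩ := h
  have hmem : p = a ∨ p = b ∨ p = c := by
    simp only [Multiset.mem_cons, Multiset.notMem_zero, or_false] at hp; exact hp
  rcases hmem with rfl | rfl | rfl
  · exact Or.inl ⟨q, hq, by rw [Multiset.erase_cons_head]⟩
  · refine Or.inr (Or.inl ⟨q, hq, ?_⟩)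
    rw [Multiset.erase_cons_tail _ hba.symm, Multiset.erase_cons_head]
  · refine Or.inr (Or.inr ⟨q, hq, ?_⟩)
    rw [Multiset.erase_cons_tail _ hca.symm, Multiset.erase_cons_tail _ hcb.symm,
      Multiset.erase_cons_head]
lemma move_double {a c : ℕ} {t : Multiset ℕ} (hca : c ≠ a)
    (h : NimMove (a ::ₘ c ::ₘ c ::ₘ 0) t) :
    (∃ u, u < a ∧ t = u ::ₘ c ::ₘ c ::ₘ 0) ∨ (∃ u, u < c ∧ t = u ::ₘ a ::ₘ c ::ₘ 0) := by
  obtain ⟨p, q, hp, hq, rfl⟩ := h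
  have hmem : p = a ∨ p = c := by
    simp only [Multiset.mem_cons, Multiset.notMem_zero, or_false] at hp; tauto
  rcases hmem with rfl | rfl
  · exact Or.inl ⟨q, hq, by rw [Multiset.erase_cons_head]⟩
  · refine Or.inr ⟨q, hq, ?_⟩
    rw [Multiset.erase_cons_tail _ hca.symm, Multiset.erase_cons_head]

lemma core_pair {F : Finset (Multiset ℕ)} {zs zb y x x1 x2 : ℕ}
    (h1 : zs < zb) (h2 : zb < y) (h3 : y < x) (hyF : Fmax F < y)
    (hx1 : y < x1) (hx2 : y < x2)
    (hPx : PPos F (x ::ₘ zs ::ₘ zb ::ₘ 0))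
    (hP1 : PPos F (x1 ::ₘ y ::ₘ zb ::ₘ 0))
    (hP2 : PPos F (x2 ::ₘ y ::ₘ zs ::ₘ 0)) : False := by
  have hmP : NimP F (y ::ₘ zs ::ₘ zb ::ₘ 0) := by
    rw [nimP_iff]
    intro b mv hbF hbN
    rcases move_triple (by omega) (by omega) (by omega) mv with ⟨u, hu, rfl⟩ | ⟨u, hu, rfl⟩ | ⟨u, hu, rfl⟩
    · exact pair_unique hPx ⟨hbF, hbN⟩ (by omega)
    · exact pair_unique hP1 ⟨hbF, hbN⟩ (by omega)
    · exact pair_unique hP2 ⟨hbF, hbN⟩ (by omega)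
  have hmF : (y ::ₘ zs ::ₘ zb ::ₘ 0) ∉ F :=
    notin_F (Multiset.mem_cons_self _ _) hyF
  have hchild : NimMove (x1 ::ₘ y ::ₘ zb ::ₘ 0) (zs ::ₘ y ::ₘ zb ::ₘ 0) :=
    move_cons _ (by omega)
  have : ¬ NimP F (zs ::ₘ y ::ₘ zb ::ₘ 0) := by
    refine ((nimP_iff F _).1 hP1.2) _ hchild ?_
    rw [Multiset.cons_swap]; exact hmF
  rw [Multiset.cons_swap] at hmP
  exact this (by exact hmP)

lemma core_fixed {F : Finset (Multiset ℕ)} {z y x x1 : ℕ}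
    (h1 : z < y) (h2 : y < x) (hyF : Fmax F < y) (hx1 : y < x1)
    (hPx : PPos F (x ::ₘ z ::ₘ z ::ₘ 0))
    (hP1 : PPos F (x1 ::ₘ y ::ₘ z ::ₘ 0)) : False := by
  have hmP : NimP F (y ::ₘ z ::ₘ z ::ₘ 0) := by
    rw [nimP_iff]
    intro b mv hbF hbN
    rcases move_double (by omega) mv with ⟨u, hu, rfl⟩ | ⟨u, hu, rfl⟩
    · exact pair_unique hPx ⟨hbF, hbN⟩ (by omega)
    · exact pair_unique hP1 ⟨hbF, hbN⟩ (by omega)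
  have hmF : (y ::ₘ z ::ₘ z ::ₘ 0) ∉ F :=
    notin_F (Multiset.mem_cons_self _ _) hyF
  exact ((nimP_iff F _).1 hPx.2) _ (move_cons _ h2) hmF hmP

lemma rot3 {u a b : ℕ} : (u ::ₘ a ::ₘ b ::ₘ 0 : Multiset ℕ) = a ::ₘ b ::ₘ u ::ₘ 0 := by
  rw [Multiset.cons_swap u a, Multiset.cons_swap u b]

lemma extract (F : Finset (Multiset ℕ)) {x y : ℕ} (hxy : y < x) (hyF : Fmax F < y)
    (hole : (x, y) ∉ Sset F) {x' : ℕ} (hx' : x ≤ x') (hS : (x', y) ∈ Sset F) :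
    ∃ z w, z < y ∧ w < y ∧ w ≠ z ∧ PPos F (x ::ₘ w ::ₘ z ::ₘ 0) ∧
      PPos F (x' ::ₘ y ::ₘ z ::ₘ 0) := by
  obtain ⟨z, hzy, hyx', hP⟩ := hS
  have hP : PPos F (x' ::ₘ y ::ₘ z ::ₘ 0) := hP
  have hxx' : x < x' := by
    rcases lt_or_eq_of_le hx' with h | rfl
    · exact h
    · exact absurd ⟨z, hzy, hxy, hP⟩ hole
  have hN : ¬ NimP F (x ::ₘ y ::ₘ z ::ₘ 0) :=
    ((nimP_iff F _).1 hP.2) _ (move_cons _ hxx')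
      (notin_F (Multiset.mem_cons_of_mem (Multiset.mem_cons_self _ _)) hyF)
  obtain ⟨b, mv, hbF, hbN⟩ := (not_nimP_iff F _).1 hN
  rcases move_triple (by omega) (by omega) (by omega) mv with ⟨u, hu, rfl⟩ | ⟨w, hw, rfl⟩ | ⟨u, hu, rfl⟩
  · exact absurd (pair_unique hP ⟨hbF, hbN⟩ (by omega)) not_false
  · -- b = w ::ₘ x ::ₘ z ::ₘ 0, the good case
    have hPb : PPos F (x ::ₘ w ::ₘ z ::ₘ 0) := by
      rw [Multiset.cons_swap]; exact ⟨hbF, hbN⟩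
    by_cases hwz : w = z
    · subst hwz
      exact absurd (core_fixed (by omega) hxy hyF hyx' hPb hP) not_false
    · exact ⟨z, w, hzy, hw, hwz, hPb, hP⟩
  · -- b = u ::ₘ x ::ₘ y ::ₘ 0 with u < z : contradicts the hole
    have hPb : PPos F (x ::ₘ y ::ₘ u ::ₘ 0) := by
      rw [← rot3]; exact ⟨hbF, hbN⟩
    exact absurd ⟨u, by omega, hxy, hPb⟩ hole

lemma to_min_max {F : Finset (Multiset ℕ)} {x w z : ℕ} (hwz : w ≠ z)
    (h : PPos F (x ::ₘ w ::ₘ z ::ₘ 0)) :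
    PPos F (min w z ::ₘ x ::ₘ max w z ::ₘ 0) := by
  rcases hwz.lt_or_gt with hlt | hlt
  · rw [min_eq_left hlt.le, max_eq_right hlt.le, ← Multiset.cons_swap]; exact h
  · rw [min_eq_right hlt.le, max_eq_left hlt.le]
    rw [Multiset.cons_swap w z] at h
    rw [← Multiset.cons_swap]; exact h


/-- For all x > y > 4·F_max + 3·|F|, if (x,y) ∉ S then b(x,y) ≥ r(x,y). -/
theorem b_ge_r_of_hole (F : Finset (Multiset ℕ)) (x y : ℕ)
    (hxy : x > y) (hy : y > 4 * Fmax F + 3 * F.card)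
    (h : (x, y) ∉ Sset F) : bdef F x y ≥ rdef F x y := by
  have hyF : Fmax F < y := by omega
  set R' : Set ℕ := {x' | x ≤ x' ∧ (x', y) ∈ Sset F} with hR
  set B' : Set ℕ := {y' | y' ≤ y ∧ (x, y') ∈ Sset F} with hB
  show R'.ncard ≤ B'.ncard
  classical
  set Q : ℕ → ℕ → ℕ → Prop := fun x' z w =>
    z < y ∧ w < y ∧ w ≠ z ∧ PPos F (x ::ₘ w ::ₘ z ::ₘ 0) ∧
      PPos F (x' ::ₘ y ::ₘ z ::ₘ 0) with hQ
  set f : ℕ → ℕ := fun x' =>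
    if h : ∃ z w, Q x' z w then max h.choose_spec.choose h.choose else 0 with hf
  have key : ∀ x' ∈ R', ∃ z w, Q x' z w := by
    intro x' hx'
    exact extract F hxy hyF h hx'.1 hx'.2
  have fval : ∀ x' (hex : ∃ z w, Q x' z w),
      f x' = max hex.choose_spec.choose hex.choose := by
    intro x' hex
    simp only [hf, dif_pos hex]
  refine Set.ncard_le_ncard_of_injOn f ?_ ?_ ((Set.finite_Iic y).subset (fun t ht => ht.1))
  · intro x' hx'
    have hex := key x' hx'
    obtain ⟨hz, hw, hwz, hPb, hP⟩ := hex.choose_spec.choose_spec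
    set z := hex.choose
    set w := hex.choose_spec.choose
    rw [fval x' hex]
    refine ⟨by omega, ⟨min w z, ?_, by omega, ?_⟩⟩
    · omega
    · have := to_min_max hwz hPb
      rw [rot3] at this
      exact this
  · intro a1 ha1 a2 ha2 hfeq
    by_contra hne
    have hex1 := key a1 ha1
    have hex2 := key a2 ha2
    obtain ⟨hz1, hw1, hwz1, hPb1, hP1⟩ := hex1.choose_spec.choose_spec
    obtain ⟨hz2, hw2, hwz2, hPb2, hP2⟩ := hex2.choose_spec.choose_spec
    set z1 := hex1.choose
    set w1 := hex1.choose_spec.choose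
    set z2 := hex2.choose
    set w2 := hex2.choose_spec.choose
    rw [fval a1 hex1, fval a2 hex2] at hfeq
    have hya1 : y < a1 := ha1.2.choose_spec.2.1
    have hya2 : y < a2 := ha2.2.choose_spec.2.1
    by_cases hz12 : z1 = z2
    · rw [hz12] at hP1
      exact pair_unique hP1 hP2 hne
    · have hm1 := to_min_max hwz1 hPb1
      have hm2 := to_min_max hwz2 hPb2
      rw [show (max w1 z1) = (max w2 z2) from hfeq] at hm1
      have hmineq : min w1 z1 = min w2 z2 := by
        by_contra hne'
        exact pair_unique hm1 hm2 hne'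
      rcases (by omega :
          (z1 = max w2 z2 ∧ w1 = min w2 z2 ∧ z2 = min w2 z2 ∧ w2 = max w2 z2) ∨
          (z1 = min w2 z2 ∧ w1 = max w2 z2 ∧ z2 = max w2 z2 ∧ w2 = min w2 z2)) with
        ⟨e1, e2, e3, e4⟩ | ⟨e1, e2, e3, e4⟩
      · -- z1 big, z2 small
        refine core_pair (zs := z2) (zb := z1) (x := x) (x1 := a1) (x2 := a2)
          (by omega) (by omega) hxy hyF hya1 hya2 ?_ hP1 hP2
        have : w1 = z2 := by omega
        rw [← this]; exact hPb1
      · refine core_pair (zs := z1) (zb := z2) (x := x) (x1 := a2) (x2 := a1)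
          (by omega) (by omega) hxy hyF hya2 hya1 ?_ hP2 hP1
        have : w2 = z1 := by omega
        rw [← this]; exact hPb2
end
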